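/- arXiv:2412.14583 — 5 statements merged into one kernel-verified Lean document; each statement's English description precedes it below -/
import Mathlib

section
/- Let x_1, ..., x_t be non-negative real numbers such that x_i ≤ 2·x_j for every i, j ∈ {1,...,t}, and let C = ∑ x_i. Then ∑ x_i² ≤ (9/8)·C²/t. -/
/-!
Let `m` be the smallest of the `x i`, so that every `x i` lies in `[m, 2m]`. Then
`(x i - m) * (2m - x i) ≥ 0` bounds `x i ^ 2` by a linear function of `x i`; summing gives
`∑ x i ^ 2 ≤ 3 m C - 2 t m ^ 2`, and this quadratic in `m` is at most `9 C ^ 2 / (8 t)`.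
-/

open Finset

lemma sq_le_add_mul_sub_mul_of_le_of_le {a b y : ℝ} (ha : a ≤ y) (hb : y ≤ b) :
    y ^ 2 ≤ (a + b) * y - a * b := by
  nlinarith [mul_nonneg (sub_nonneg.2 ha) (sub_nonneg.2 hb)]

lemma sum_sq_le_of_mem_Icc {ι : Type*} (s : Finset ι) (f : ι → ℝ) {a b : ℝ}
    (hf : ∀ i ∈ s, f i ∈ Set.Icc a b) :
    ∑ i ∈ s, f i ^ 2 ≤ (a + b) * ∑ i ∈ s, f i - #s * (a * b) := by
  calc ∑ i ∈ s, f i ^ 2 ≤ ∑ i ∈ s, ((a + b) * f i - a * b) :=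
        sum_le_sum fun i hi => sq_le_add_mul_sub_mul_of_le_of_le (hf i hi).1 (hf i hi).2
    _ = (a + b) * ∑ i ∈ s, f i - #s * (a * b) := by
        rw [sum_sub_distrib, ← mul_sum, sum_const, nsmul_eq_mul]

lemma sum_sq_le_of_le_two_mul {ι : Type*} [Fintype ι] [Nonempty ι] (x : ι → ℝ)
    (hx : ∀ i j, x i ≤ 2 * x j) :
    ∑ i, x i ^ 2 ≤ 9 / 8 * (∑ i, x i) ^ 2 / Fintype.card ι := by
  obtain ⟨i₀, -, hmin⟩ := exists_min_image univ x univ_nonempty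
  set m := x i₀
  set C := ∑ i, x i
  have hsum : ∑ i, x i ^ 2 ≤ 3 * m * C - Fintype.card ι * (2 * m ^ 2) := by
    have := sum_sq_le_of_mem_Icc univ x fun i _ => ⟨hmin i (mem_univ i), hx i i₀⟩
    rw [card_univ] at this
    linarith
  have hcard : (0 : ℝ) < Fintype.card ι := by exact_mod_cast Fintype.card_pos
  rw [div_mul_eq_mul_div, le_div_iff₀ hcard]
  -- `8 n (3 m C - 2 n m ^ 2) = 9 C ^ 2 - (3 C - 4 n m) ^ 2` with `n = card ι`
  nlinarith [sq_nonneg (3 * C - 4 * Fintype.card ι * m)]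

theorem stmt0_general (t : ℕ) (ht : 0 < t) (x : Fin t → ℝ)
    (hbal : ∀ i j, x i ≤ 2 * x j)
    (C : ℝ) (hC : C = ∑ i, x i) :
    ∑ i, (x i) ^ 2 ≤ 9 / 8 * C ^ 2 / t := by
  have : NeZero t := ⟨ht.ne'⟩
  simpa only [hC, Fintype.card_fin] using sum_sq_le_of_le_two_mul x hbal

theorem stmt0 (t : ℕ) (ht : 0 < t) (x : Fin t → ℝ)
    (hnn : ∀ i, 0 ≤ x i) (hbal : ∀ i j, x i ≤ 2 * x j)
    (C : ℝ) (hC : C = ∑ i, x i) :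
    ∑ i, (x i) ^ 2 ≤ 9 / 8 * C ^ 2 / t :=
  stmt0_general t ht x hbal C hC
end

section
/- Fix a nonnegative real C and positive integer t ≥ 1. Consider P = { x ∈ ℝ^t : ∑ x_i = C, 0 ≤ x_i, x_i ≤ 2 x_j for all i, j }. If x ∈ P is an extreme point of P, then there exists α ≥ 0 such that every coordinate x_i ∈ {α, 2α}. -/
set_option maxHeartbeats 1000000 in
theorem stmt4 (C : ℝ) (hC : 0 ≤ C) (t : ℕ) (ht : 1 ≤ t)
    (P : Set (Fin t → ℝ))
    (hP : P = {x | (∑ i, x i) = C ∧ (∀ i, 0 ≤ x i) ∧ ∀ i j, x i ≤ 2 * x j})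
    (x : Fin t → ℝ) (hx : x ∈ P)
    (hext : ∀ x' ∈ P, ∀ x'' ∈ P, ∀ l : ℝ, 0 < l → l < 1 →
      x = l • x' + (1 - l) • x'' → x' = x'') :
    ∃ α : ℝ, 0 ≤ α ∧ ∀ i, x i = α ∨ x i = 2 * α := by
  subst hP
  obtain ⟨hsum, hpos, hle⟩ := hx
  have htpos : 0 < t := ht
  haveI : NeZero t := ⟨by omega⟩
  -- minimum coordinate
  obtain ⟨j0, -, hj0⟩ := Finset.exists_min_image Finset.univ x ⟨⟨0, htpos⟩, Finset.mem_univ _⟩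
  set m : ℝ := x j0 with hm
  have hmle : ∀ i, m ≤ x i := fun i => hj0 i (Finset.mem_univ i)
  have hub : ∀ i, x i ≤ 2 * m := fun i => hle i j0
  have hm0 : 0 ≤ m := hpos j0
  -- main claim: every coordinate is m or 2m
  by_contra hcon
  push_neg at hcon
  obtain ⟨i0, hi0m, hi0M⟩ := hcon m hm0
  -- m > 0
  have hmpos : 0 < m := by
    rcases lt_or_eq_of_le hm0 with h | h
    · exact h
    · exfalso
      apply hi0m
      have h1 := hub i0
      have h2 := hpos i0
      linarith
  have hi0lt : x i0 < 2 * m := lt_of_le_of_ne (hub i0) hi0M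
  have hi0gt : m < x i0 := lt_of_le_of_ne (hmle i0) (Ne.symm hi0m)
  classical
  -- classes
  set A : Finset (Fin t) := Finset.univ.filter (fun i => x i = m) with hA
  set B : Finset (Fin t) := (Finset.univ.filter (fun i => ¬ x i = m)).filter (fun i => x i = 2*m) with hB
  set K : Finset (Fin t) := (Finset.univ.filter (fun i => ¬ x i = m)).filter (fun i => ¬ x i = 2*m) with hK
  have hj0A : j0 ∈ A := by simp [hA, hm]
  have hi0K : i0 ∈ K := by simp [hK, hi0m, hi0M]
  have hapos : 1 ≤ A.card := Finset.card_pos.mpr ⟨j0, hj0A⟩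
  have hkpos : 1 ≤ K.card := Finset.card_pos.mpr ⟨i0, hi0K⟩
  set a : ℕ := A.card
  set b : ℕ := B.card
  set k : ℕ := K.card
  have hkR : (1:ℝ) ≤ (k:ℝ) := by exact_mod_cast hkpos
  have haR : (1:ℝ) ≤ (a:ℝ) := by exact_mod_cast hapos
  set c : ℝ := -(((a:ℝ) + 2*(b:ℝ))/(k:ℝ)) with hc
  have hcneg : c < 0 := by
    rw [hc, neg_lt, neg_zero]
    apply div_pos (by linarith [(Nat.cast_nonneg b : (0:ℝ) ≤ b)]) (by linarith)
  set d : Fin t → ℝ := fun i => if x i = m then 1 else if x i = 2*m then 2 else c with hd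
  -- sum of d is zero
  have hSA : ∑ i ∈ A, d i = (a:ℝ) * 1 := by
    rw [show ∑ i ∈ A, d i = ∑ _i ∈ A, (1:ℝ) from Finset.sum_congr rfl (fun i hi => by
      rw [hA, Finset.mem_filter] at hi
      simp only [hd, if_pos hi.2]), Finset.sum_const, nsmul_eq_mul]
  have hSB : ∑ i ∈ B, d i = (b:ℝ) * 2 := by
    rw [show ∑ i ∈ B, d i = ∑ _i ∈ B, (2:ℝ) from Finset.sum_congr rfl (fun i hi => by
      rw [hB, Finset.mem_filter, Finset.mem_filter] at hi
      simp only [hd, if_neg hi.1.2, if_pos hi.2]), Finset.sum_const, nsmul_eq_mul]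
  have hSK : ∑ i ∈ K, d i = (k:ℝ) * c := by
    rw [show ∑ i ∈ K, d i = ∑ _i ∈ K, c from Finset.sum_congr rfl (fun i hi => by
      rw [hK, Finset.mem_filter, Finset.mem_filter] at hi
      simp only [hd, if_neg hi.1.2, if_neg hi.2]), Finset.sum_const, nsmul_eq_mul]
  have hsumd : ∑ i, d i = 0 := by
    have hsplit1 := Finset.sum_filter_add_sum_filter_not Finset.univ (fun i => x i = m) d
    have hsplit2 := Finset.sum_filter_add_sum_filter_not
      (Finset.univ.filter (fun i => ¬ x i = m)) (fun i => x i = 2*m) d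
    rw [← hA] at hsplit1
    rw [← hB, ← hK] at hsplit2
    have h1 : ∑ i, d i = (a:ℝ) * 1 + ((b:ℝ) * 2 + (k:ℝ) * c) := by
      rw [← hsplit1, ← hsplit2, hSA, hSB, hSK]
    have hkne : (k:ℝ) ≠ 0 := by linarith
    have h2 : (k:ℝ) * c = -((a:ℝ) + 2*(b:ℝ)) := by
      rw [hc, mul_neg, mul_comm, div_mul_cancel₀ _ hkne]
    rw [h1, h2]
    ring
  -- a + b ≤ t
  have hABdisj : Disjoint A B := by
    rw [Finset.disjoint_left]
    intro i hiA hiB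
    rw [hA, Finset.mem_filter] at hiA
    rw [hB, Finset.mem_filter, Finset.mem_filter] at hiB
    exact hiB.1.2 hiA.2
  have habt : a + b ≤ t := by
    calc a + b = (A ∪ B).card := (Finset.card_union_of_disjoint hABdisj).symm
    _ ≤ (Finset.univ : Finset (Fin t)).card := Finset.card_le_card (Finset.subset_univ _)
    _ = t := by simp
  have habtR : (a:ℝ) + (b:ℝ) ≤ (t:ℝ) := by exact_mod_cast habt
  have htR : (1:ℝ) ≤ (t:ℝ) := by exact_mod_cast ht
  -- bound on |d|
  have hdb : ∀ i, |d i| ≤ 2 * t := by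
    intro i
    by_cases h1 : x i = m
    · have hd1 : d i = 1 := by simp [hd, h1]
      rw [hd1, abs_one]; linarith
    · by_cases h2 : x i = 2*m
      · have hne2 : ¬ (2*m : ℝ) = m := by intro h; linarith
        have hd2 : d i = 2 := by simp [hd, h1, h2, hne2]
        rw [hd2, abs_two]; linarith
      · simp only [hd, if_neg h1, if_neg h2]
        rw [abs_of_neg hcneg, hc, neg_neg]
        have hb0 : (0:ℝ) ≤ (b:ℝ) := Nat.cast_nonneg b
        have : ((a:ℝ) + 2*(b:ℝ))/(k:ℝ) ≤ (a:ℝ) + 2*(b:ℝ) := by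
          apply div_le_self (by linarith) hkR
        linarith
  -- slack lower bound
  have hne : (Finset.univ : Finset (Fin t × Fin t)).Nonempty := ⟨(j0,j0), Finset.mem_univ _⟩
  set g : Fin t × Fin t → ℝ := fun p => if x p.1 = 2 * x p.2 then m else 2 * x p.2 - x p.1 with hg
  set sl : ℝ := Finset.univ.inf' hne g with hsl
  have hspos : 0 < sl := by
    rw [hsl, Finset.lt_inf'_iff]
    intro p _
    by_cases h : x p.1 = 2 * x p.2
    · simpa [hg, h] using hmpos
    · have h1 := hle p.1 p.2
      have h2 : x p.1 < 2 * x p.2 := lt_of_le_of_ne h1 h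
      simp only [hg, if_neg h]
      linarith
  have hsle : ∀ p : Fin t × Fin t, sl ≤ g p := fun p => Finset.inf'_le _ (Finset.mem_univ p)
  set ε : ℝ := min m sl / (6 * t) with hε
  have h6t : (0:ℝ) < 6 * t := by linarith
  have hεpos : 0 < ε := by
    apply div_pos (lt_min hmpos hspos) h6t
  have hε6 : ε * (6 * t) ≤ min m sl := by
    rw [hε, div_mul_cancel₀ _ (ne_of_gt h6t)]
  have hεm : ε * (6 * t) ≤ m := le_trans hε6 (min_le_left _ _)
  have hεs : ε * (6 * t) ≤ sl := le_trans hε6 (min_le_right _ _)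
  -- feasibility of the two perturbed points
  have hfeas : ∀ σ : ℝ, σ = 1 ∨ σ = -1 →
      (fun i => x i + σ * ε * d i) ∈
      {x : Fin t → ℝ | (∑ i, x i) = C ∧ (∀ i, 0 ≤ x i) ∧ ∀ i j, x i ≤ 2 * x j} := by
    intro σ hσ
    have hσ1 : |σ| = 1 := by rcases hσ with h | h <;> simp [h]
    refine ⟨?_, ?_, ?_⟩
    · rw [Finset.sum_add_distrib, hsum, ← Finset.mul_sum, hsumd]
      ring
    · intro i
      show 0 ≤ x i + σ * ε * d i
      have h1 := hdb i
      have h2 : |σ * ε * d i| ≤ ε * (2 * t) := by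
        rw [abs_mul, abs_mul, hσ1, one_mul, abs_of_pos hεpos]
        exact mul_le_mul_of_nonneg_left h1 hεpos.le
      have h3 : -(ε * (2*t)) ≤ σ * ε * d i := (abs_le.mp h2).1
      have h4 : ε * (2*t) ≤ ε * (6*t) := by
        apply mul_le_mul_of_nonneg_left (by linarith) hεpos.le
      have h5 := hmle i
      linarith
    · intro i j
      show x i + σ * ε * d i ≤ 2 * (x j + σ * ε * d j)
      by_cases hbind : x i = 2 * x j
      · -- binding constraint: x j = m, x i = 2m
        have hxjm : x j = m := by
          have h1 := hub i
          have h2 := hmle j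
          linarith
        have hxim : x i = 2 * m := by rw [hbind, hxjm]
        have hxinem : ¬ x i = m := by rw [hxim]; intro h; linarith
        have hdi : d i = 2 := by simp only [hd, if_neg hxinem, if_pos hxim]
        have hdj : d j = 1 := by simp only [hd, if_pos hxjm]
        simp only [hdi, hdj]
        rw [hbind]; ring_nf; linarith [le_refl (x j)]
      · -- slack constraint
        have h1 : sl ≤ 2 * x j - x i := by
          have := hsle (i, j)
          simpa [hg, hbind] using this
        have hdi := abs_le.mp (hdb i)
        have hdj := abs_le.mp (hdb j)
        have e1 : ε * d i ≤ ε * (2*t) := mul_le_mul_of_nonneg_left hdi.2 hεpos.le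
        have e2 : ε * (-(2*t)) ≤ ε * d i := mul_le_mul_of_nonneg_left hdi.1 hεpos.le
        have e3 : ε * d j ≤ ε * (2*t) := mul_le_mul_of_nonneg_left hdj.2 hεpos.le
        have e4 : ε * (-(2*t)) ≤ ε * d j := mul_le_mul_of_nonneg_left hdj.1 hεpos.le
        rcases hσ with h | h <;> subst h <;> linarith
  -- apply extremality
  have key := hext _ (hfeas 1 (Or.inl rfl)) _ (hfeas (-1) (Or.inr rfl)) (1/2)
    (by norm_num) (by norm_num) ?_
  · have hkey := congrFun key i0
    have hdi0 : d i0 = c := by simp only [hd, if_neg hi0m, if_neg hi0M]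
    rw [hdi0] at hkey
    have : ε * c = 0 := by linarith
    rcases mul_eq_zero.mp this with h | h
    · exact absurd h (ne_of_gt hεpos)
    · exact absurd h (ne_of_lt hcneg)
  · funext i
    simp only [Pi.add_apply, Pi.smul_apply, smul_eq_mul]
    ring
end

section
/- For a fixed nonnegative real C and positive integer t, and for any α ≥ 0 and integer k with 0 ≤ k ≤ t satisfying k·α + (t−k)·2α = C, it holds that k·α² + (t−k)·4α² ≤ (9/8)·C²/t. -/
/-! With `t - k` coordinates equal to `2α`, the sum is `C = α (2t - k)` and the sum of squares is
`α² (4t - 3k)`, and `9 (2t - k)² - 8t (4t - 3k) = (2t - 3k)²`. The extremal case `k = 2t/3`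
gives equality. -/

theorem two_level_sq_identity {R : Type*} [CommRing R] (t k α : R) :
    9 * (k * α + (t - k) * (2 * α)) ^ 2 - 8 * t * (k * α ^ 2 + (t - k) * (4 * α ^ 2)) =
      (α * (2 * t - 3 * k)) ^ 2 := by
  ring

theorem two_level_sum_sq_le {K : Type*} [Field K] [LinearOrder K] [IsStrictOrderedRing K]
    {t : K} (ht : 0 < t) (k α : K) :
    k * α ^ 2 + (t - k) * (4 * α ^ 2) ≤ 9 / 8 * (k * α + (t - k) * (2 * α)) ^ 2 / t := by
  rw [le_div_iff₀ ht]
  nlinarith [two_level_sq_identity t k α, sq_nonneg (α * (2 * t - 3 * k))]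

theorem stmt6_general (C : ℝ) (t : ℕ) (ht : 1 ≤ t)
    (α : ℝ) (k : ℕ)
    (hsum : (k : ℝ) * α + ((t : ℝ) - k) * (2 * α) = C) :
    (k : ℝ) * α ^ 2 + ((t : ℝ) - k) * (4 * α ^ 2) ≤ 9 / 8 * C ^ 2 / t := by
  subst hsum
  exact two_level_sum_sq_le (Nat.cast_pos.mpr ht) _ _

theorem stmt6 (C : ℝ) (hC : 0 ≤ C) (t : ℕ) (ht : 1 ≤ t)
    (α : ℝ) (hα : 0 ≤ α) (k : ℕ) (hk : k ≤ t)
    (hsum : (k : ℝ) * α + ((t : ℝ) - k) * (2 * α) = C) :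
    (k : ℝ) * α ^ 2 + ((t : ℝ) - k) * (4 * α ^ 2) ≤ 9 / 8 * C ^ 2 / t :=
  stmt6_general C t ht α k hsum
end

section
/- For integers 2 ≤ n ≤ m, it holds that ∑_{k=1}^{n−1} (1/(k+1))·(nm − k(k+1)/2)² > (ln n − 2)·n²m². -/
/-!
Expanding the square, the `k`-th term is at least `N² / (k + 1) - N k` with `N = n m`. Summing,
`∑ 1 / (k + 1) = H_n - 1 > log n - 1` and `∑ k = n (n - 1) / 2 ≤ N`, which leaves
`N² (log n - 1) - N² = (log n - 2) N²`.
-/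

open Finset

lemma Finset.sum_range_eq_add_sum_Icc_one {M : Type*} [AddCommMonoid M] (f : ℕ → M) {n : ℕ}
    (hn : 0 < n) : ∑ k ∈ range n, f k = f 0 + ∑ k ∈ Icc 1 (n - 1), f k := by
  rw [range_eq_Ico]
  exact sum_eq_sum_Ico_succ_bot hn f

lemma sum_Icc_one_natCast_mul_two (n : ℕ) : (∑ k ∈ Icc 1 (n - 1), (k : ℝ)) * 2 = n * (n - 1) := by
  rcases Nat.eq_zero_or_pos n with rfl | hn
  · simp
  have gauss := congrArg (Nat.cast : ℕ → ℝ) (sum_range_id_mul_two n)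
  push_cast [Nat.cast_sub hn, sum_range_eq_add_sum_Icc_one _ hn] at gauss
  simpa using gauss

lemma sum_Icc_one_div_succ (n : ℕ) (hn : 0 < n) :
    ∑ k ∈ Icc 1 (n - 1), 1 / ((k : ℝ) + 1) = harmonic n - 1 := by
  rw [harmonic, Rat.cast_sum, sum_range_eq_add_sum_Icc_one _ hn]
  push_cast
  simp [one_div]

lemma log_sub_one_lt_sum_Icc_one_div_succ (n : ℕ) (hn : 0 < n) :
    Real.log n - 1 < ∑ k ∈ Icc 1 (n - 1), 1 / ((k : ℝ) + 1) := by
  have hlog_lt : Real.log n < Real.log (n + 1) :=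
    Real.log_lt_log (by exact_mod_cast hn) (lt_add_one _)
  have hharmonic : Real.log (n + 1) ≤ harmonic n := by exact_mod_cast log_add_one_le_harmonic n
  rw [sum_Icc_one_div_succ n hn]
  linarith

lemma mul_one_div_add_one_sub_le (N k : ℝ) (hk : 0 ≤ k) :
    N ^ 2 * (1 / (k + 1)) - N * k ≤ 1 / (k + 1) * (N - k * (k + 1) / 2) ^ 2 := by
  have hk1 : k + 1 ≠ 0 := by positivity
  have expand : 1 / (k + 1) * (N - k * (k + 1) / 2) ^ 2
      = N ^ 2 * (1 / (k + 1)) - N * k + (k / 2) ^ 2 * (k + 1) := by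
    field_simp
    ring
  rw [expand]
  exact le_add_of_nonneg_right (by positivity)

theorem stmt10 (n m : ℕ) (hn : 2 ≤ n) (hnm : n ≤ m) :
    (Real.log n - 2) * n ^ 2 * m ^ 2 <
      ∑ k ∈ Finset.Icc 1 (n - 1),
        (1 / ((k : ℝ) + 1)) * ((n : ℝ) * m - k * (k + 1) / 2) ^ 2 := by
  have hn0 : (0 : ℝ) < n := by exact_mod_cast (show 0 < n by omega)
  have hnm' : (n : ℝ) ≤ m := by exact_mod_cast hnm
  have hN : (0 : ℝ) < n * m := by nlinarith
  have termwise := sum_le_sum fun k (_ : k ∈ Icc 1 (n - 1)) ↦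
    mul_one_div_add_one_sub_le ((n : ℝ) * m) k k.cast_nonneg
  rw [sum_sub_distrib, ← mul_sum, ← mul_sum] at termwise
  have hharmonic := mul_lt_mul_of_pos_left (log_sub_one_lt_sum_Icc_one_div_succ n (by omega))
    (pow_pos hN 2)
  have hgauss : ∑ k ∈ Icc 1 (n - 1), (k : ℝ) ≤ n * m := by
    nlinarith [sum_Icc_one_natCast_mul_two n]
  linear_combination termwise + hharmonic + mul_le_mul_of_nonneg_left hgauss hN.le
end

section
/- Let t ≥ 1 and let s_1 ≤ s_2 ≤ ... ≤ s_t be positive reals with s_t ≤ 2·s_1 and ∑ s_ℓ = S. Then ∑ s_ℓ² ≤ (9/8)·S²/t. -/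
/-! If every `s i` lies in `[m, 2m]`, then `(s i - m) (s i - 2m) ≤ 0` bounds `∑ s i ^ 2` by the
linear expression `3 m S - 2 m² t`, and maximising this over `m` gives `9 S² / (8 t)`. -/

open Finset

lemma sq_le_of_le_of_le_two_mul {m x : ℝ} (hm : m ≤ x) (hx : x ≤ 2 * m) :
    x ^ 2 ≤ 3 * m * x - 2 * m ^ 2 := by
  nlinarith [mul_nonneg (sub_nonneg.2 hm) (sub_nonneg.2 hx)]

lemma three_mul_mul_sub_two_mul_sq_le {t : ℝ} (ht : 0 < t) (m S : ℝ) :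
    3 * m * S - 2 * m ^ 2 * t ≤ 9 / 8 * S ^ 2 / t := by
  rw [le_div_iff₀ ht]
  nlinarith [sq_nonneg (4 * m * t - 3 * S)]

theorem sum_sq_le_of_forall_le_le_two_mul {ι : Type*} [Fintype ι] (s : ι → ℝ) (m : ℝ)
    (hm : ∀ i, m ≤ s i) (h2m : ∀ i, s i ≤ 2 * m) :
    ∑ i, s i ^ 2 ≤ 9 / 8 * (∑ i, s i) ^ 2 / Fintype.card ι := by
  cases isEmpty_or_nonempty ι
  · simp
  calc ∑ i, s i ^ 2 ≤ ∑ i, (3 * m * s i - 2 * m ^ 2) :=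
        sum_le_sum fun i _ => sq_le_of_le_of_le_two_mul (hm i) (h2m i)
    _ = 3 * m * ∑ i, s i - 2 * m ^ 2 * Fintype.card ι := by
        rw [sum_sub_distrib, ← mul_sum, sum_const, card_univ, nsmul_eq_mul]; ring
    _ ≤ _ := three_mul_mul_sub_two_mul_sq_le (by exact_mod_cast Fintype.card_pos) _ _

theorem stmt13 (t : ℕ) (ht : 1 ≤ t) (s : Fin t → ℝ)
    (hmono : Monotone s)
    (hbal : s ⟨t - 1, by omega⟩ ≤ 2 * s ⟨0, by omega⟩)
    (S : ℝ) (hS : S = ∑ i, s i) :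
    ∑ i, (s i) ^ 2 ≤ 9 / 8 * S ^ 2 / t := by
  have hmin : ∀ i, s ⟨0, by omega⟩ ≤ s i := fun i => hmono (Fin.le_def.2 (Nat.zero_le _))
  have hmax : ∀ i, s i ≤ 2 * s ⟨0, by omega⟩ :=
    fun i => (hmono (Fin.le_def.2 (by simp only; omega))).trans hbal
  simpa [hS] using sum_sq_le_of_forall_le_le_two_mul s _ hmin hmax
end
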